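/- arXiv:1704.08627 — 4 statements merged into one kernel-verified Lean document; each statement's English description precedes it below -/
import Mathlib

section
/- Let q = 2^ℓ and let a₁, b₁, a₂, b₂ be exponents such that neither X^{a₁}Y^{b₁} nor X^{a₂}Y^{b₂} is good (i.e., both restrict to degree exactly q−1 on every simple line). For any simple line L(T) = (T, αT + β) with α, β ≠ 0, the coefficient of T^{q−1} in the restriction of X^{a₁}Y^{b₁} + X^{a₂}Y^{b₂} to L is α^{−a₁}β^{b₁+a₁} + α^{−a₂}β^{b₂+a₂}. In particular, this restriction has degree < q−1 if and only if α^{a₂−a₁} = β^{b₂−b₁+a₂−a₁}. -/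
open Polynomial

/-- `Shadow2 n m` : every bit set in `n` is also set in `m` (i.e. `n ≤₂ m`). -/
def Shadow2 (n m : ℕ) : Prop := ∀ i, n.testBit i = true → m.testBit i = true

lemma shadow2_le {n m : ℕ} (h : Shadow2 n m) : n ≤ m := by
  have : n &&& m = n := by
    apply Nat.eq_of_testBit_eq
    intro i
    rw [Nat.testBit_and]
    cases hn : n.testBit i
    · simp
    · simp [h i hn]
  calc n = n &&& m := this.symm
    _ ≤ m := Nat.and_le_right

lemma shadow2_div2 {n m : ℕ} (h : Shadow2 n m) : Shadow2 (n / 2) (m / 2) := by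
  intro i hi
  rw [Nat.testBit_div_two] at hi ⊢
  exact h _ hi

lemma choose_odd : ∀ k b : ℕ, Shadow2 k b → Nat.choose b k % 2 = 1 := by
  intro k
  induction k using Nat.strong_induction_on with
  | _ k IH =>
    intro b h
    rcases Nat.eq_zero_or_pos k with hk | hk
    · simp [hk]
    · haveI : Fact (Nat.Prime 2) := ⟨Nat.prime_two⟩
      have hmod : Nat.choose b k % 2 =
          (Nat.choose (b % 2) (k % 2) * Nat.choose (b / 2) (k / 2)) % 2 :=
        Choose.choose_modEq_choose_mod_mul_choose_div_nat (p := 2)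
      have h2 : Nat.choose (b / 2) (k / 2) % 2 = 1 :=
        IH (k / 2) (by omega) (b / 2) (shadow2_div2 h)
      have h1 : Nat.choose (b % 2) (k % 2) = 1 := by
        have hk2 : k % 2 = 1 → b % 2 = 1 := by
          intro hk2
          have := h 0
          simp only [Nat.testBit_zero, decide_eq_true_eq] at this
          exact this hk2
        have hkv : k % 2 = 0 ∨ k % 2 = 1 := by omega
        have hbv : b % 2 = 0 ∨ b % 2 = 1 := by omega
        rcases hkv with hkv | hkv <;> rcases hbv with hbv | hbv <;> simp_all
      rw [hmod, Nat.mul_mod, h1, h2]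

lemma degM {F : Type*} [Field F] {q : ℕ} (hq : 2 ≤ q) :
    (X ^ q - X : F[X]).degree = q := by
  rw [degree_sub_eq_left_of_degree_lt, degree_X_pow]
  rw [degree_X, degree_X_pow]
  exact_mod_cast (by omega : 1 < q)

-- reduction of X^n mod X^q - X for q ≤ n ≤ 2q-2
lemma Xpow_mod {F : Type*} [Field F] {q : ℕ} (hq : 2 ≤ q)
    (hM : Monic (X ^ q - X : F[X])) {n : ℕ} (hn1 : q ≤ n) (hn2 : n ≤ 2 * q - 2) :
    (X ^ n : F[X]) %ₘ (X ^ q - X) = X ^ (n - q + 1) := by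
  refine (div_modByMonic_unique (X ^ (n - q)) (X ^ (n - q + 1)) hM ⟨?_, ?_⟩).2
  · have h1 : (X : F[X]) * X ^ (n - q) = X ^ (n - q + 1) := by rw [← pow_succ']
    rw [sub_mul, ← pow_add, show q + (n - q) = n from by omega, h1]
    ring
  · rw [degM hq, degree_X_pow]
    exact_mod_cast (by omega : n - q + 1 < q)

lemma Xpow_mod_coeff {F : Type*} [Field F] {q : ℕ} (hq : 2 ≤ q)
    (hM : Monic (X ^ q - X : F[X])) {n : ℕ} (hn : n ≤ 2 * q - 3) :
    ((X ^ n : F[X]) %ₘ (X ^ q - X)).coeff (q - 1) = if n = q - 1 then 1 else 0 := by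
  rcases lt_or_ge n q with hlt | hge
  · rw [(modByMonic_eq_self_iff hM).2 (by rw [degM hq, degree_X_pow]; exact_mod_cast hlt),
      coeff_X_pow]
    simp [eq_comm]
  · rw [Xpow_mod hq hM hge (by omega), coeff_X_pow]
    have h1 : ¬ (q - 1 = n - q + 1) := by omega
    have h2 : ¬ (n = q - 1) := by omega
    simp [h1, h2]

/-- key single-monomial computation -/
lemma monomial_mod_coeff {F : Type*} [Field F] [Fintype F] [CharP F 2]
    {q : ℕ} (hq : 2 ≤ q) (hF : Fintype.card F = q)
    (hM : Monic (X ^ q - X : F[X]))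
    {a b : ℕ} (ha : a ≤ q - 1) (hb : b ≤ q - 1) (hab : a + b < 2 * (q - 1))
    (hs : Shadow2 (q - 1 - a) b) (α β : F) (hα : α ≠ 0) (hβ : β ≠ 0) :
    ((X ^ a * (C α * X + C β) ^ b : F[X]) %ₘ (X ^ q - X)).coeff (q - 1)
      = α⁻¹ ^ a * β ^ (b + a) := by
  have hba : q - 1 - a ≤ b := shadow2_le hs
  have hexp : (X ^ a * (C α * X + C β) ^ b : F[X]) =
      ∑ k ∈ Finset.range (b + 1), (α ^ k * β ^ (b - k) * (b.choose k : F)) • X ^ (a + k) := by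
    rw [add_pow, Finset.mul_sum]
    apply Finset.sum_congr rfl
    intro k _
    rw [mul_pow, ← C_pow, ← C_pow, smul_eq_C_mul, pow_add, C_mul, C_mul, C_eq_natCast]
    ring
  rw [hexp]
  have hlin : (∑ k ∈ Finset.range (b + 1),
        (α ^ k * β ^ (b - k) * (b.choose k : F)) • X ^ (a + k) : F[X]) %ₘ (X ^ q - X) =
      ∑ k ∈ Finset.range (b + 1),
        (α ^ k * β ^ (b - k) * (b.choose k : F)) • ((X ^ (a + k) : F[X]) %ₘ (X ^ q - X)) := by
    have := map_sum (modByMonicHom (X ^ q - X : F[X]))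
      (fun k => (α ^ k * β ^ (b - k) * (b.choose k : F)) • (X ^ (a + k) : F[X]))
      (Finset.range (b + 1))
    simp only [modByMonicHom, LinearMap.coe_mk, AddHom.coe_mk] at this
    rw [this]
    apply Finset.sum_congr rfl
    intro k _
    exact smul_modByMonic _ _
  rw [hlin, finset_sum_coeff]
  have hterm : ∀ k ∈ Finset.range (b + 1),
      ((α ^ k * β ^ (b - k) * (b.choose k : F)) •
        ((X ^ (a + k) : F[X]) %ₘ (X ^ q - X))).coeff (q - 1)
      = if k = q - 1 - a then α ^ k * β ^ (b - k) * (b.choose k : F) else 0 := by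
    intro k hk
    rw [Finset.mem_range] at hk
    rw [coeff_smul, Xpow_mod_coeff hq hM (by omega), smul_eq_mul]
    by_cases hkq : k = q - 1 - a
    · rw [if_pos (by omega), if_pos hkq, mul_one]
    · rw [if_neg (by omega), if_neg hkq, mul_zero]
  rw [Finset.sum_congr rfl hterm, Finset.sum_ite_eq' (Finset.range (b + 1)) (q - 1 - a)]
  rw [if_pos (Finset.mem_range.2 (by omega))]
  -- now the value
  have hodd : (b.choose (q - 1 - a) : F) = 1 := by
    have h1 := choose_odd _ _ hs
    obtain ⟨m, hm⟩ : ∃ m, b.choose (q - 1 - a) = 2 * m + 1 := ⟨b.choose (q - 1 - a) / 2, by omega⟩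
    rw [hm]
    push_cast
    rw [CharTwo.two_eq_zero]
    ring
  rw [hodd, mul_one]
  have hαq : α ^ (q - 1 - a) = α⁻¹ ^ a := by
    have h1 : α ^ (q - 1 - a) * α ^ a = 1 := by
      rw [← pow_add, show q - 1 - a + a = q - 1 from by omega, ← hF]
      exact FiniteField.pow_card_sub_one_eq_one α hα
    rw [inv_pow]
    exact eq_inv_of_mul_eq_one_left h1
  have hβq : β ^ (b - (q - 1 - a)) = β ^ (b + a) := by
    have h1 : β ^ (b + a) = β ^ (b - (q - 1 - a)) * β ^ (q - 1) := by
      rw [← pow_add, show b - (q - 1 - a) + (q - 1) = b + a from by omega]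
    rw [h1, ← hF, FiniteField.pow_card_sub_one_eq_one β hβ, mul_one]
  rw [hαq, hβq]

/-- Restricting a binomial `X^{a₁}Y^{b₁} + X^{a₂}Y^{b₂}` whose two monomials are
both not good to a simple line `L(T) = (T, αT + β)`: the coefficient of
`T^(q-1)` equals `α^{-a₁}β^{b₁+a₁} + α^{-a₂}β^{b₂+a₂}`, and it vanishes (i.e.
the restriction has degree `< q-1`) iff `α^{a₂-a₁} = β^{b₂-b₁+a₂-a₁}`. -/
theorem binomial_restriction (ℓ : ℕ) (F : Type*) [Field F] [Fintype F]
    (hF : Fintype.card F = 2 ^ ℓ) (q : ℕ) (hq : q = 2 ^ ℓ)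
    (a₁ b₁ a₂ b₂ : ℕ)
    (ha₁ : a₁ ≤ q - 1) (hb₁ : b₁ ≤ q - 1) (hab₁ : a₁ + b₁ < 2 * (q - 1))
    (ha₂ : a₂ ≤ q - 1) (hb₂ : b₂ ≤ q - 1) (hab₂ : a₂ + b₂ < 2 * (q - 1))
    (hng₁ : Shadow2 (q - 1 - a₁) b₁) (hng₂ : Shadow2 (q - 1 - a₂) b₂)
    (α β : F) (hα : α ≠ 0) (hβ : β ≠ 0) :
    (((X ^ a₁ * (C α * X + C β) ^ b₁ + X ^ a₂ * (C α * X + C β) ^ b₂ : F[X])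
        %ₘ (X ^ q - X)).coeff (q - 1)
      = α⁻¹ ^ a₁ * β ^ (b₁ + a₁) + α⁻¹ ^ a₂ * β ^ (b₂ + a₂)) ∧
    ((((X ^ a₁ * (C α * X + C β) ^ b₁ + X ^ a₂ * (C α * X + C β) ^ b₂ : F[X])
        %ₘ (X ^ q - X)).degree < ((q - 1 : ℕ) : WithBot ℕ)) ↔
      α ^ ((a₂ : ℤ) - a₁) = β ^ ((b₂ : ℤ) - b₁ + ((a₂ : ℤ) - a₁))) := by
  have hFq : Fintype.card F = q := by rw [hF, hq]
  have hq2 : 2 ≤ q := by omega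
  have hℓ : 1 ≤ ℓ := by
    by_contra h
    interval_cases ℓ <;> omega
  haveI : CharP F 2 := by
    have hchar : ringChar F = 2 := by
      rw [FiniteField.even_card_iff_char_two, hF]
      obtain ⟨m, rfl⟩ : ∃ m, ℓ = m + 1 := ⟨ℓ - 1, by omega⟩
      rw [pow_succ]
      omega
    exact hchar ▸ ringChar.charP F
  have hM : Monic (X ^ q - X : F[X]) :=
    monic_X_pow_sub (by rw [degree_X]; exact_mod_cast (by omega : 1 < q))
  have hcoeff : ((X ^ a₁ * (C α * X + C β) ^ b₁ + X ^ a₂ * (C α * X + C β) ^ b₂ : F[X])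
        %ₘ (X ^ q - X)).coeff (q - 1)
      = α⁻¹ ^ a₁ * β ^ (b₁ + a₁) + α⁻¹ ^ a₂ * β ^ (b₂ + a₂) := by
    rw [add_modByMonic, coeff_add,
      monomial_mod_coeff hq2 hFq hM ha₁ hb₁ hab₁ hng₁ α β hα hβ,
      monomial_mod_coeff hq2 hFq hM ha₂ hb₂ hab₂ hng₂ α β hα hβ]
  refine ⟨hcoeff, ?_⟩
  set r := ((X ^ a₁ * (C α * X + C β) ^ b₁ + X ^ a₂ * (C α * X + C β) ^ b₂ : F[X])
        %ₘ (X ^ q - X)) with hr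
  have hdegr : r.degree < (q : ℕ) := by
    have := degree_modByMonic_lt
      (X ^ a₁ * (C α * X + C β) ^ b₁ + X ^ a₂ * (C α * X + C β) ^ b₂ : F[X]) hM
    rwa [degM hq2] at this
  have hiff1 : r.degree < ((q - 1 : ℕ) : WithBot ℕ) ↔ r.coeff (q - 1) = 0 := by
    rw [degree_lt_iff_coeff_zero]
    constructor
    · intro h
      exact h (q - 1) le_rfl
    · intro h m hm
      have hm' : (q - 1 : ℕ) ≤ m := by exact_mod_cast hm
      rcases eq_or_lt_of_le hm' with hm2 | hm2
      · exact hm2 ▸ h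
      · refine coeff_eq_zero_of_degree_lt (lt_of_lt_of_le hdegr ?_)
        exact_mod_cast (by omega : q ≤ m)
  rw [hiff1, hcoeff]
  have hiff2 : α⁻¹ ^ a₁ * β ^ (b₁ + a₁) + α⁻¹ ^ a₂ * β ^ (b₂ + a₂) = 0 ↔
      α⁻¹ ^ a₁ * β ^ (b₁ + a₁) = α⁻¹ ^ a₂ * β ^ (b₂ + a₂) := by
    rw [add_eq_zero_iff_eq_neg, CharTwo.neg_eq]
  rw [hiff2]
  rw [show ((b₂ : ℤ) - b₁ + ((a₂ : ℤ) - a₁)) = ((b₂ + a₂ : ℕ) : ℤ) - ((b₁ + a₁ : ℕ) : ℤ) from by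
      push_cast; ring,
    show ((a₂ : ℤ) - a₁) = ((a₂ : ℕ) : ℤ) - ((a₁ : ℕ) : ℤ) from rfl,
    zpow_sub₀ hα, zpow_sub₀ hβ, zpow_natCast, zpow_natCast, zpow_natCast, zpow_natCast,
    div_eq_div_iff (pow_ne_zero _ hα) (pow_ne_zero _ hβ),
    inv_pow, inv_pow, inv_mul_eq_div, inv_mul_eq_div,
    div_eq_div_iff (pow_ne_zero _ hα) (pow_ne_zero _ hα)]
  constructor <;> intro h <;> linear_combination h
end

section
/- Let q = 2^ℓ and let s, t divide q−1. Define e(s, t) to be the number of pairs (i, j) with 0 ≤ i < s, 0 ≤ j < t such that there exist m, n ∈ {0,…,q−1} with m ≡ i (mod s), n ≡ j (mod t), and n ≤₂ m. Then the F_q-vector space of bivariate polynomials of degree at most q−1 in each variable whose restriction to every line L(T) = (T, αT + β), α ∈ G_s, β ∈ G_t, has degree < q−1, has dimension at least q² − e(s, t). -/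
open scoped Classical
open Polynomial

/-- `e s t q`: the number of pairs `(i,j) ∈ [s] × [t]` for which there exist
`m, n ∈ [q]` with `m ≡ i (mod s)`, `n ≡ j (mod t)` and `n ≤₂ m`. -/
noncomputable def eST (s t q : ℕ) : ℕ :=
  ((Finset.range s ×ˢ Finset.range t).filter
    (fun p => ∃ m < q, ∃ n < q, m % s = p.1 ∧ n % t = p.2 ∧ Shadow2 n m)).card

/-!
Write a polynomial of degree `< q` in each variable as `f = ∑ c m n • X^m Y^n`. Modulo `T^q - T`
its restriction to a line has degree `< q`, and its coefficient of `T^(q-1)` is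
`-∑_{x ∈ F_q} f(x, αx + β)`, since `∑_x x^e` is `-1` for `e = q - 1` and `0` for the other `e < q`.
Expanding `(αx + β)^n` and reducing the binomial coefficients mod 2 by Lucas's theorem,
`∑_x x^m (αx + β)^n` is `α^(q-1-m) β^(n-(q-1-m))` when `q-1-m ≤₂ n` and `(m, n) ≠ (q-1, q-1)`,
and `0` otherwise. As `α^s = β^t = 1`, this only depends on the residue
`(m mod s, (n - (q-1-m)) mod t)`, and that residue is one of the pairs counted by `e(s, t)`,
with witness `(m, n - (q-1-m))`. So the `e(s, t)` linear conditions "the coefficients of each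
residue class sum to zero" imply all the line conditions, leaving a solution space of dimension
at least `q² - e(s, t)`.
-/

-- Read off from the `BitVec` version in a width where neither `a`, `b` nor `a + b` overflows.
theorem Nat.add_eq_or_of_and_eq_zero {a b : ℕ} (h : a &&& b = 0) : a + b = a ||| b := by
  have hw : ∀ x ≤ a + b, x < 2 ^ (a + b + 1) := fun x hx =>
    hx.trans_lt ((Nat.lt_two_pow_self).trans (Nat.pow_lt_pow_right (by norm_num) (by omega)))
  have := congrArg BitVec.toNat <| BitVec.add_eq_or_of_and_eq_zero
    (BitVec.ofNat (a + b + 1) a) (BitVec.ofNat (a + b + 1) b) (by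
      apply BitVec.eq_of_toNat_eq
      simp [Nat.mod_eq_of_lt (hw a (by omega)), Nat.mod_eq_of_lt (hw b (by omega)), h])
  simpa [BitVec.toNat_add, Nat.mod_eq_of_lt (hw a (by omega)), Nat.mod_eq_of_lt (hw b (by omega)),
    Nat.mod_eq_of_lt (hw (a + b) le_rfl)] using this

namespace Shadow2

theorem le {k n : ℕ} (h : Shadow2 k n) : k ≤ n := Nat.le_of_testBit h

theorem testBit_sub {k n : ℕ} (h : Shadow2 k n) (i : ℕ) :
    (n - k).testBit i = (n.testBit i && !k.testBit i) := by
  have hdisjoint : k &&& (n ^^^ k) = 0 := Nat.eq_of_testBit_eq fun j => by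
    cases hk : k.testBit j <;> simp [hk, h j]
  have hunion : k ||| (n ^^^ k) = n := Nat.eq_of_testBit_eq fun j => by
    cases hk : k.testBit j <;> simp [hk, h j]
  have hsub : n - k = n ^^^ k := by
    have := Nat.add_eq_or_of_and_eq_zero hdisjoint
    omega
  rw [hsub, Nat.testBit_xor]
  cases hk : k.testBit i <;> simp [hk, h i]

theorem sub_complement {k n ℓ : ℕ} (h : Shadow2 k n) (hn : n < 2 ^ ℓ) :
    Shadow2 (n - k) (2 ^ ℓ - 1 - k) := by
  intro i hi
  rw [h.testBit_sub, Bool.and_eq_true] at hi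
  have hiℓ : i < ℓ := (Nat.pow_lt_pow_iff_right (by norm_num)).1
    ((Nat.ge_two_pow_of_testBit hi.1).trans_lt hn)
  rw [Nat.sub_sub, Nat.add_comm, Nat.testBit_two_pow_sub_succ (h.le.trans_lt hn)]
  simpa [hiℓ] using hi.2

end Shadow2

theorem Nat.choose_mod_two (n k : ℕ) : n.choose k % 2 = if Shadow2 k n then 1 else 0 := by
  have hbit : ∀ i, (n / 2 ^ i % 2).choose (k / 2 ^ i % 2) =
      if (k.testBit i = true → n.testBit i = true) then 1 else 0 := fun i => by
    rw [Nat.testBit_eq_decide_div_mod_eq, Nat.testBit_eq_decide_div_mod_eq]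
    rcases Nat.mod_two_eq_zero_or_one (n / 2 ^ i) with hn | hn <;>
      rcases Nat.mod_two_eq_zero_or_one (k / 2 ^ i) with hk | hk <;> simp [hn, hk]
  have hlt : ∀ x ≤ n + k, x < 2 ^ (n + k) := fun x hx =>
    hx.trans_lt Nat.lt_two_pow_self
  have hlucas := Choose.choose_modEq_prod_range_choose_nat (p := 2)
    (hlt n (by omega)) (hlt k (by omega))
  rw [Finset.prod_congr rfl fun i _ => hbit i, Finset.prod_boole] at hlucas
  have hshadow : (∀ i ∈ Finset.range (n + k), k.testBit i = true → n.testBit i = true) ↔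
      Shadow2 k n := by
    refine ⟨fun h i hi => h i ?_ hi, fun h i _ => h i⟩
    exact Finset.mem_range.2 ((Nat.pow_lt_pow_iff_right (by norm_num)).1
      ((Nat.ge_two_pow_of_testBit hi).trans_lt (hlt k (by omega))))
  simp only [hshadow] at hlucas
  rw [hlucas]
  split_ifs <;> rfl

theorem CharTwo.natCast_choose {R : Type*} [AddGroupWithOne R] [CharP R 2] (n k : ℕ) :
    (n.choose k : R) = if Shadow2 k n then 1 else 0 := by
  rw [CharP.natCast_eq_natCast_mod R 2, Nat.choose_mod_two]
  split_ifs <;> simp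

def IsLineSumExponent (q m n : ℕ) : Prop := Shadow2 (q - 1 - m) n ∧ ¬(m = q - 1 ∧ n = q - 1)

noncomputable def shadowResidues (s t q : ℕ) : Finset (ℕ × ℕ) :=
  (Finset.range s ×ˢ Finset.range t).filter
    (fun p => ∃ m < q, ∃ n < q, m % s = p.1 ∧ n % t = p.2 ∧ Shadow2 n m)

theorem card_shadowResidues (s t q : ℕ) : (shadowResidues s t q).card = eST s t q := rfl

def lineResidue (s t q m n : ℕ) : ℕ × ℕ := (m % s, (n - (q - 1 - m)) % t)

theorem lineResidue_mem_shadowResidues {ℓ s t q m n : ℕ} (hq : q = 2 ^ ℓ) (hs : 0 < s)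
    (ht : 0 < t) (hm : m < q) (hn : n < q) (h : IsLineSumExponent q m n) :
    lineResidue s t q m n ∈ shadowResidues s t q := by
  subst hq
  have hshadow := h.1.sub_complement hn
  rw [show 2 ^ ℓ - 1 - (2 ^ ℓ - 1 - m) = m by omega] at hshadow
  simp only [shadowResidues, lineResidue, Finset.mem_filter, Finset.mem_product, Finset.mem_range]
  exact ⟨⟨Nat.mod_lt _ hs, Nat.mod_lt _ ht⟩, m, hm, _, by omega, rfl, rfl, hshadow⟩

theorem pow_mul_pow_eq_lineResidue {M : Type*} [Monoid M] {s t q m : ℕ} {α β : M}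
    (hα : α ^ s = 1) (hβ : β ^ t = 1) (hm : m < q) (n : ℕ) :
    α ^ (q - 1 - m) * β ^ (n - (q - 1 - m)) =
      α ^ (q - 1 - (lineResidue s t q m n).1) * β ^ (lineResidue s t q m n).2 := by
  have hαm : α ^ (q - 1 - m % s) = α ^ (q - 1 - m) := by
    have := Nat.mod_add_div m s
    rw [show q - 1 - m % s = q - 1 - m + s * (m / s) by omega, pow_add, pow_mul, hα, one_pow,
      mul_one]
  simp only [lineResidue, hαm, ← pow_eq_pow_mod _ hβ]

noncomputable def residueSums (K : Type*) [CommSemiring K] (s t q : ℕ) :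
    (Fin q × Fin q → K) →ₗ[K] (shadowResidues s t q → K) :=
  LinearMap.pi fun y => ∑ p ∈ Finset.univ.filter (fun p : Fin q × Fin q =>
    IsLineSumExponent q p.1 p.2 ∧ lineResidue s t q p.1 p.2 = y), LinearMap.proj p

theorem residueSums_apply {K : Type*} [CommSemiring K] {s t q : ℕ} (c : Fin q × Fin q → K)
    (y : shadowResidues s t q) :
    residueSums K s t q c y = ∑ p ∈ Finset.univ.filter (fun p : Fin q × Fin q =>
      IsLineSumExponent q p.1 p.2 ∧ lineResidue s t q p.1 p.2 = y), c p := by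
  simp [residueSums]

noncomputable def bivariateOfCoeffs (K : Type*) [CommSemiring K] (q : ℕ) :
    (Fin q × Fin q → K) →ₗ[K] MvPolynomial (Fin 2) K :=
  ∑ p : Fin q × Fin q,
    (MvPolynomial.monomial (Finsupp.single 0 (p.1 : ℕ) + Finsupp.single 1 (p.2 : ℕ))).comp
      (LinearMap.proj p)

section bivariateOfCoeffs

variable {K : Type*} [CommSemiring K] {q : ℕ}

theorem bivariateOfCoeffs_apply (c : Fin q × Fin q → K) :
    bivariateOfCoeffs K q c =
      ∑ p : Fin q × Fin q,
        MvPolynomial.monomial (Finsupp.single 0 (p.1 : ℕ) + Finsupp.single 1 (p.2 : ℕ)) (c p) := by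
  simp [bivariateOfCoeffs]

theorem coeff_bivariateOfCoeffs (c : Fin q × Fin q → K) (p : Fin q × Fin q) :
    (bivariateOfCoeffs K q c).coeff (Finsupp.single 0 (p.1 : ℕ) + Finsupp.single 1 (p.2 : ℕ)) =
      c p := by
  rw [bivariateOfCoeffs_apply, MvPolynomial.coeff_sum, Finset.sum_eq_single p]
  · simp
  · intro p' _ hne
    rw [MvPolynomial.coeff_monomial, if_neg]
    intro h
    exact hne (Prod.ext (Fin.ext (by simpa using DFunLike.congr_fun h 0))
      (Fin.ext (by simpa using DFunLike.congr_fun h 1)))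
  · simp

theorem bivariateOfCoeffs_injective : Function.Injective (bivariateOfCoeffs K q) :=
  fun c d h => funext fun p => by rw [← coeff_bivariateOfCoeffs c p, h, coeff_bivariateOfCoeffs]

theorem degreeOf_bivariateOfCoeffs_le (c : Fin q × Fin q → K) (i : Fin 2) :
    (bivariateOfCoeffs K q c).degreeOf i ≤ q - 1 := by
  have hmem : bivariateOfCoeffs K q c ∈ MvPolynomial.restrictDegree (Fin 2) K (q - 1) := by
    rw [bivariateOfCoeffs_apply]
    refine Submodule.sum_mem _ fun p _ => ?_
    rw [MvPolynomial.mem_restrictDegree]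
    intro d hd j
    rw [Finset.mem_singleton.1 (MvPolynomial.support_monomial_subset hd)]
    fin_cases j
    · simpa using Nat.le_sub_one_of_lt p.1.isLt
    · simpa using Nat.le_sub_one_of_lt p.2.isLt
  exact MvPolynomial.degreeOf_le_iff.2 fun d hd =>
    (MvPolynomial.mem_restrictDegree _ _ _).1 hmem d hd i

theorem eval_bivariateOfCoeffs (c : Fin q × Fin q → K) (v : Fin 2 → K) :
    MvPolynomial.eval v (bivariateOfCoeffs K q c) =
      ∑ p : Fin q × Fin q, c p * (v 0 ^ (p.1 : ℕ) * v 1 ^ (p.2 : ℕ)) := by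
  simp [bivariateOfCoeffs_apply, MvPolynomial.eval_monomial, Finsupp.prod_pow, Fin.prod_univ_two]

end bivariateOfCoeffs

theorem eval_aeval_line {R : Type*} [CommRing R] (f : MvPolynomial (Fin 2) R) (α β x : R) :
    (MvPolynomial.aeval ![X, C α * X + C β] f).eval x = MvPolynomial.eval ![x, α * x + β] f := by
  have hpoint : (fun i => aeval x (![X, C α * X + C β] i)) = ![x, α * x + β] := by
    funext i
    fin_cases i <;> simp
  rw [← coe_aeval_eq_eval, MvPolynomial.comp_aeval_apply, hpoint]
  rfl

theorem LinearMap.finrank_sub_finrank_le_finrank_ker {K V W : Type*} [DivisionRing K]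
    [AddCommGroup V] [Module K V] [AddCommGroup W] [Module K W] [FiniteDimensional K V]
    [FiniteDimensional K W] (f : V →ₗ[K] W) :
    Module.finrank K V - Module.finrank K W ≤ Module.finrank K (LinearMap.ker f) := by
  have := f.finrank_range_add_finrank_ker
  have := (LinearMap.range f).finrank_le
  omega

namespace FiniteField

variable {K : Type*} [Field K] [Fintype K]

local notation "q" => Fintype.card K

theorem sum_pow_eq_ite (e : ℕ) :
    ∑ x : K, x ^ e = if e ≠ 0 ∧ q - 1 ∣ e then -1 else 0 := by
  rcases eq_or_ne e 0 with rfl | he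
  · simp
  rw [Fintype.sum_eq_add_sum_subtype_ne _ 0, zero_pow he, zero_add,
    ← Fintype.sum_equiv unitsEquivNeZero (fun u : Kˣ => (u : K) ^ e) _ fun _ => rfl,
    sum_pow_units]
  simp [he]

theorem sum_pow_of_le_two_mul {e : ℕ} (he : e ≤ 2 * (q - 1)) :
    ∑ x : K, x ^ e = if e = q - 1 ∨ e = 2 * (q - 1) then -1 else 0 := by
  have hq : 1 < q := Fintype.one_lt_card
  have hcases : (e ≠ 0 ∧ q - 1 ∣ e) ↔ (e = q - 1 ∨ e = 2 * (q - 1)) := by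
    constructor
    · rintro ⟨he0, c, rfl⟩
      have hc : c ≤ 2 := Nat.le_of_mul_le_mul_left (Nat.mul_comm 2 (q - 1) ▸ he) (by omega)
      interval_cases c <;> simp_all [Nat.mul_comm]
    · rintro (rfl | rfl)
      · exact ⟨by omega, dvd_rfl⟩
      · exact ⟨by omega, dvd_mul_left _ _⟩
  simp only [sum_pow_eq_ite, hcases]

theorem sum_eval_modByMonic_X_pow_card_sub_X (P : K[X]) :
    ∑ x : K, (P %ₘ (X ^ q - X)).eval x = ∑ x : K, P.eval x := by
  refine Finset.sum_congr rfl fun x _ => ?_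
  simp [modByMonic_eq_sub_mul_div, pow_card]

theorem degree_modByMonic_X_pow_card_sub_X_lt_iff (P : K[X]) :
    (P %ₘ (X ^ q - X)).degree < ((q - 1 : ℕ) : WithBot ℕ) ↔ ∑ x : K, P.eval x = 0 := by
  have hq : 1 < q := Fintype.one_lt_card
  have hmonic : (X ^ q - X : K[X]).Monic := monic_X_pow_sub (by rw [degree_X]; exact_mod_cast hq)
  set r := P %ₘ (X ^ q - X)
  have hdeg := X_pow_card_sub_X_natDegree_eq K hq
  have hr : r.natDegree < q := hdeg ▸ natDegree_modByMonic_lt P hmonic fun h => by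
    rw [h, natDegree_one] at hdeg; omega
  have hsum : ∑ x : K, r.eval x = -r.coeff (q - 1) := by
    simp_rw [eval_eq_sum_range' hr]
    rw [Finset.sum_comm]
    simp_rw [← Finset.mul_sum, sum_pow_eq_ite]
    rw [Finset.sum_eq_single (q - 1)]
    · rw [if_pos ⟨by omega, dvd_rfl⟩, mul_neg_one]
    · intro e he hne
      have : ¬(e ≠ 0 ∧ q - 1 ∣ e) := fun ⟨he0, hdvd⟩ =>
        hne (Nat.eq_of_le_of_lt_succ (Nat.le_of_dvd (Nat.pos_of_ne_zero he0) hdvd)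
          (by simp at he; omega))
      simp [this]
    · simp
  rw [← sum_eval_modByMonic_X_pow_card_sub_X, hsum, neg_eq_zero, degree_lt_iff_coeff_zero]
  refine ⟨fun h => h _ le_rfl, fun h m hm => ?_⟩
  rcases hm.eq_or_lt with rfl | hlt
  · exact h
  · exact coeff_eq_zero_of_natDegree_lt (by omega)

theorem sum_pow_mul_line_pow [CharP K 2] {α β : K} (hα : α ≠ 0) (hβ : β ≠ 0) {m n : ℕ}
    (hm : m < q) (hn : n < q) :
    ∑ x : K, x ^ m * (α * x + β) ^ n =
      if IsLineSumExponent q m n then α ^ (q - 1 - m) * β ^ (n - (q - 1 - m)) else 0 := by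
  have hexpand : ∑ x : K, x ^ m * (α * x + β) ^ n = ∑ k ∈ Finset.range (n + 1),
      (if Shadow2 k n then α ^ k * β ^ (n - k) else 0) *
        (if m + k = q - 1 ∨ m + k = 2 * (q - 1) then 1 else 0) := by
    simp_rw [add_pow, Finset.mul_sum]
    rw [Finset.sum_comm]
    refine Finset.sum_congr rfl fun k hk => ?_
    have hk : k ≤ n := Nat.lt_succ_iff.1 (Finset.mem_range.1 hk)
    have hterm : ∀ x : K, x ^ m * ((α * x) ^ k * β ^ (n - k) * (n.choose k : K)) =
        ((n.choose k : K) * (α ^ k * β ^ (n - k))) * x ^ (m + k) := fun x => by ring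
    rw [Finset.sum_congr rfl fun x _ => hterm x, ← Finset.mul_sum,
      sum_pow_of_le_two_mul (by omega), CharTwo.natCast_choose, CharTwo.neg_eq]
    split_ifs <;> simp
  have hq : 1 < q := Fintype.one_lt_card
  rw [hexpand]
  by_cases hcorner : m = q - 1 ∧ n = q - 1
  · obtain ⟨rfl, rfl⟩ := hcorner
    rw [if_neg fun h => h.2 ⟨rfl, rfl⟩,
      Finset.sum_eq_add_of_mem 0 (q - 1) (by simp) (by simp) (by omega) fun k hk hk' => ?_]
    -- the surviving terms `k = 0` and `k = q - 1` are both `1` and cancel in characteristic 2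
    · simp [pow_card_sub_one_eq_one α hα, pow_card_sub_one_eq_one β hβ, ← two_mul,
        CharTwo.two_eq_zero,
        show Shadow2 0 (q - 1) from fun i h => by simp at h,
        show Shadow2 (q - 1) (q - 1) from fun i h => h]
    · have : ¬(q - 1 + k = q - 1 ∨ q - 1 + k = 2 * (q - 1)) := by
        simp only [Finset.mem_range] at hk; omega
      rw [if_neg this, mul_zero]
  · rw [Finset.sum_eq_single (q - 1 - m)]
    · simp [IsLineSumExponent, hcorner, show m + (q - 1 - m) = q - 1 by omega]
    · intro k hk hne
      have : ¬(m + k = q - 1 ∨ m + k = 2 * (q - 1)) := by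
        simp only [Finset.mem_range] at hk; omega
      rw [if_neg this, mul_zero]
    · intro hnot
      have : ¬Shadow2 (q - 1 - m) n := fun h => hnot (Finset.mem_range.2 (by have := h.le; omega))
      simp [this]

theorem sum_eval_line_bivariateOfCoeffs [CharP K 2] {s t : ℕ} (hs : 0 < s) (ht : 0 < t)
    {α β : K} (hα : α ^ s = 1) (hβ : β ^ t = 1) (c : Fin q × Fin q → K) :
    ∑ x : K, MvPolynomial.eval ![x, α * x + β] (bivariateOfCoeffs K q c) =
      ∑ y : shadowResidues s t q, α ^ (q - 1 - y.1.1) * β ^ y.1.2 * residueSums K s t q c y := by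
  obtain ⟨ℓ, -, hq⟩ := FiniteField.card K 2
  have hα0 : α ≠ 0 := by rintro rfl; simp [zero_pow hs.ne'] at hα
  have hβ0 : β ≠ 0 := by rintro rfl; simp [zero_pow ht.ne'] at hβ
  let weight (y : ℕ × ℕ) : K := α ^ (q - 1 - y.1) * β ^ y.2
  let residue (p : Fin q × Fin q) : ℕ × ℕ := lineResidue s t q p.1 p.2
  let lineSupport := Finset.univ.filter fun p : Fin q × Fin q => IsLineSumExponent q p.1 p.2
  calc ∑ x : K, MvPolynomial.eval ![x, α * x + β] (bivariateOfCoeffs K q c)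
      = ∑ p : Fin q × Fin q, c p * ∑ x : K, x ^ (p.1 : ℕ) * (α * x + β) ^ (p.2 : ℕ) := by
        simp_rw [eval_bivariateOfCoeffs, Finset.mul_sum]
        exact Finset.sum_comm
    _ = ∑ p ∈ lineSupport, c p * weight (residue p) := by
        rw [Finset.sum_filter]
        refine Finset.sum_congr rfl fun p _ => ?_
        rw [sum_pow_mul_line_pow hα0 hβ0 p.1.isLt p.2.isLt]
        split_ifs
        · rw [pow_mul_pow_eq_lineResidue hα hβ p.1.isLt]
        · rw [mul_zero]
    _ = ∑ y ∈ shadowResidues s t q, ∑ p ∈ lineSupport with residue p = y, c p * weight y := by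
        rw [← Finset.sum_fiberwise_of_maps_to fun p hp =>
          lineResidue_mem_shadowResidues hq hs ht p.1.isLt p.2.isLt (Finset.mem_filter.1 hp).2]
        refine Finset.sum_congr rfl fun y _ => Finset.sum_congr rfl fun p hp => ?_
        rw [(Finset.mem_filter.1 hp).2]
    _ = _ := by
        rw [← Finset.sum_coe_sort]
        refine Finset.sum_congr rfl fun y _ => ?_
        rw [residueSums_apply, Finset.mul_sum, Finset.filter_filter]
        exact Finset.sum_congr rfl fun p _ => mul_comm _ _

end FiniteField

/-- Dimension lower bound for the partial lift `F_{s,t}`: there are at least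
`q² - e(s,t)` linearly independent bivariate polynomials of degree at most
`q - 1` in each variable whose restriction to every line `L(T) = (T, αT + β)`
with `α ∈ G_s`, `β ∈ G_t` has degree `< q - 1`. -/
theorem partial_lift_dimension (ℓ : ℕ) (F : Type*) [Field F] [Fintype F]
    (hF : Fintype.card F = 2 ^ ℓ) (q : ℕ) (hq : q = 2 ^ ℓ)
    (s t : ℕ) (hs : s ∣ q - 1) (ht : t ∣ q - 1) :
    ∃ v : Fin (q ^ 2 - eST s t q) → MvPolynomial (Fin 2) F,
      LinearIndependent F v ∧
      ∀ k, (∀ i : Fin 2, (v k).degreeOf i ≤ q - 1) ∧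
        ∀ α β : F, α ^ s = 1 → β ^ t = 1 →
          ((MvPolynomial.aeval
              ![(X : F[X]), C α * X + C β] (v k) : F[X]) %ₘ (X ^ q - X)).degree
            < ((q - 1 : ℕ) : WithBot ℕ) := by
  have : CharP F 2 := charP_of_card_eq_prime_pow hF
  obtain rfl : q = Fintype.card F := hq.trans hF.symm
  have hcard : 1 < Fintype.card F := Fintype.one_lt_card
  have hspos : 0 < s := Nat.pos_of_dvd_of_pos hs (by omega)
  have htpos : 0 < t := Nat.pos_of_dvd_of_pos ht (by omega)
  set Λ := residueSums F s t (Fintype.card F)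
  have hker :
      Fintype.card F ^ 2 - eST s t (Fintype.card F) ≤ Module.finrank F (LinearMap.ker Λ) := by
    simpa [sq, ← card_shadowResidues] using Λ.finrank_sub_finrank_le_finrank_ker
  obtain ⟨w, hw⟩ := exists_linearIndependent_of_le_finrank hker
  let φ := (bivariateOfCoeffs F (Fintype.card F)).comp (LinearMap.ker Λ).subtype
  have hφ : LinearMap.ker φ = ⊥ :=
    LinearMap.ker_eq_bot.2 (bivariateOfCoeffs_injective.comp Subtype.val_injective)
  refine ⟨φ ∘ w, hw.map' φ hφ, fun k => ⟨degreeOf_bivariateOfCoeffs_le _, fun α β hα hβ => ?_⟩⟩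
  rw [FiniteField.degree_modByMonic_X_pow_card_sub_X_lt_iff]
  simp_rw [eval_aeval_line]
  refine (FiniteField.sum_eval_line_bivariateOfCoeffs hspos htpos hα hβ (w k)).trans ?_
  simp [Λ, LinearMap.mem_ker.1 (w k).2]
end

section
/- Every valid triple of length r in noCarry(r) or yesCarry(r) supports at most one valid pair, and every triple in maybeCarry(r) supports at most two valid pairs, where a triple (y, c₀, c₁) supports the pair (i, c) if c = c₀·2^r + c₁ and some witness (a₀, a₁) satisfies a₀ + a₁ ≡ i (mod 2^r − 1). -/
open scoped Classical

/-- `(a₀, a₁)` is a witness for the validity of the triple `(y, c₀, c₁)` of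
length `r`: `a₀, a₁ ∈ [2^r]`, `a₀ ≥₂ c₀`, `a₁ ≥₂ c₁`, and
`a₀ + a₁ ≡ y (mod 2^r)`. -/
def IsWitness (r y c₀ c₁ a₀ a₁ : ℕ) : Prop :=
  a₀ < 2 ^ r ∧ a₁ < 2 ^ r ∧ Shadow2 c₀ a₀ ∧ Shadow2 c₁ a₁ ∧ (a₀ + a₁) % 2 ^ r = y

/-- All triples `(y, c₀, c₁) ∈ [2^r]³`. -/
def triples (r : ℕ) : Finset (ℕ × ℕ × ℕ) :=
  Finset.range (2 ^ r) ×ˢ Finset.range (2 ^ r) ×ˢ Finset.range (2 ^ r)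

/-- Valid triples all of whose witnesses have `a₀ + a₁ ≤ 2^r - 1`. -/
noncomputable def noCarry (r : ℕ) : Finset (ℕ × ℕ × ℕ) :=
  (triples r).filter (fun v =>
    (∃ a₀ a₁, IsWitness r v.1 v.2.1 v.2.2 a₀ a₁) ∧
    ∀ a₀ a₁, IsWitness r v.1 v.2.1 v.2.2 a₀ a₁ → a₀ + a₁ ≤ 2 ^ r - 1)

/-- Valid triples all of whose witnesses have `a₀ + a₁ > 2^r - 1`. -/
noncomputable def yesCarry (r : ℕ) : Finset (ℕ × ℕ × ℕ) :=
  (triples r).filter (fun v =>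
    (∃ a₀ a₁, IsWitness r v.1 v.2.1 v.2.2 a₀ a₁) ∧
    ∀ a₀ a₁, IsWitness r v.1 v.2.1 v.2.2 a₀ a₁ → 2 ^ r - 1 < a₀ + a₁)

/-- Valid triples admitting witnesses of both kinds. -/
noncomputable def maybeCarry (r : ℕ) : Finset (ℕ × ℕ × ℕ) :=
  (triples r).filter (fun v =>
    (∃ a₀ a₁, IsWitness r v.1 v.2.1 v.2.2 a₀ a₁ ∧ a₀ + a₁ ≤ 2 ^ r - 1) ∧
    (∃ a₀ a₁, IsWitness r v.1 v.2.1 v.2.2 a₀ a₁ ∧ 2 ^ r - 1 < a₀ + a₁))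

/-- The triple `v = (y, c₀, c₁)` supports the pair `(i, c)` if
`c = c₀·2^r + c₁`, `i < 2^r - 1`, and some witness `(a₀, a₁)` satisfies
`a₀ + a₁ ≡ i (mod 2^r - 1)`. -/
def Supports (r : ℕ) (v : ℕ × ℕ × ℕ) (p : ℕ × ℕ) : Prop :=
  p.2 = v.2.1 * 2 ^ r + v.2.2 ∧ p.1 < 2 ^ r - 1 ∧
  ∃ a₀ a₁, IsWitness r v.1 v.2.1 v.2.2 a₀ a₁ ∧ (a₀ + a₁) % (2 ^ r - 1) = p.1

/-!
A witness sum `a₀ + a₁ < 2^(r+1)` is congruent to `y` modulo `2^r`, so it is either `y`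
(no carry) or `y + 2^r` (carry). A supported pair is determined by the witness sum, hence
a triple supports at most the two pairs coming from `y` and `y + 2^r`, and only one of them
when all its witnesses share their carry behaviour.
-/

theorem eq_or_eq_or_eq_of_eq_or {α : Type*} {a b x y z : α} (hx : x = a ∨ x = b)
    (hy : y = a ∨ y = b) (hz : z = a ∨ z = b) : x = y ∨ x = z ∨ y = z := by
  rcases hx with rfl | rfl <;> rcases hy with rfl | rfl <;> rcases hz with rfl | rfl <;> simp

namespace IsWitness

variable {r y c₀ c₁ a₀ a₁ b₀ b₁ : ℕ}

theorem lt_two_pow (h : IsWitness r y c₀ c₁ a₀ a₁) : y < 2 ^ r :=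
  h.2.2.2.2 ▸ Nat.mod_lt _ (by positivity)

theorem sum_eq_or (h : IsWitness r y c₀ c₁ a₀ a₁) : a₀ + a₁ = y ∨ a₀ + a₁ = y + 2 ^ r := by
  obtain ⟨h₀, h₁, -, -, hy⟩ := h
  rcases lt_or_ge (a₀ + a₁) (2 ^ r) with hlt | hge
  · exact .inl (by rw [← hy, Nat.mod_eq_of_lt hlt])
  · refine .inr ?_
    rw [← hy, Nat.mod_eq_sub_mod hge, Nat.mod_eq_of_lt (by omega)]
    omega

theorem sum_eq_of_carry_iff (ha : IsWitness r y c₀ c₁ a₀ a₁) (hb : IsWitness r y c₀ c₁ b₀ b₁)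
    (hcarry : a₀ + a₁ ≤ 2 ^ r - 1 ↔ b₀ + b₁ ≤ 2 ^ r - 1) : a₀ + a₁ = b₀ + b₁ := by
  have := ha.lt_two_pow
  rcases ha.sum_eq_or with h | h <;> rcases hb.sum_eq_or with h' | h' <;> omega

end IsWitness

def supportedPair (r : ℕ) (v : ℕ × ℕ × ℕ) (s : ℕ) : ℕ × ℕ :=
  (s % (2 ^ r - 1), v.2.1 * 2 ^ r + v.2.2)

namespace Supports

variable {r : ℕ} {v : ℕ × ℕ × ℕ} {p : ℕ × ℕ}

theorem exists_witness_eq (hp : Supports r v p) :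
    ∃ a₀ a₁, IsWitness r v.1 v.2.1 v.2.2 a₀ a₁ ∧ p = supportedPair r v (a₀ + a₁) := by
  obtain ⟨h₂, -, a₀, a₁, hw, h₁⟩ := hp
  exact ⟨a₀, a₁, hw, Prod.ext h₁.symm h₂⟩

theorem eq_or (hp : Supports r v p) :
    p = supportedPair r v v.1 ∨ p = supportedPair r v (v.1 + 2 ^ r) := by
  obtain ⟨a₀, a₁, hw, rfl⟩ := hp.exists_witness_eq
  rcases hw.sum_eq_or with h | h <;> rw [h]
  exacts [.inl rfl, .inr rfl]

end Supports

/-- Every triple in `noCarry(r)` or `yesCarry(r)` supports at most one pair,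
and every triple in `maybeCarry(r)` supports at most two pairs. -/
theorem supports_count (r : ℕ) (v : ℕ × ℕ × ℕ) :
    ((v ∈ noCarry r ∨ v ∈ yesCarry r) →
      ∀ p p' : ℕ × ℕ, Supports r v p → Supports r v p' → p = p') ∧
    (v ∈ maybeCarry r →
      ∀ p₁ p₂ p₃ : ℕ × ℕ, Supports r v p₁ → Supports r v p₂ → Supports r v p₃ →
        p₁ = p₂ ∨ p₁ = p₃ ∨ p₂ = p₃) := by
  refine ⟨fun hv p p' hp hp' => ?_, fun _ p₁ p₂ p₃ h₁ h₂ h₃ => ?_⟩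
  · obtain ⟨a₀, a₁, ha, rfl⟩ := hp.exists_witness_eq
    obtain ⟨b₀, b₁, hb, rfl⟩ := hp'.exists_witness_eq
    have hcarry : a₀ + a₁ ≤ 2 ^ r - 1 ↔ b₀ + b₁ ≤ 2 ^ r - 1 := by
      rcases hv with hv | hv <;> have hall := (Finset.mem_filter.1 hv).2.2
      · exact iff_of_true (hall _ _ ha) (hall _ _ hb)
      · exact iff_of_false (hall _ _ ha).not_ge (hall _ _ hb).not_ge
    rw [ha.sum_eq_of_carry_iff hb hcarry]
  · exact eq_or_eq_or_eq_of_eq_or h₁.eq_or h₂.eq_or h₃.eq_or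
end

section
/- Let q = 2^ℓ with ℓ even. Then e(√q − 1, q − 1), the number of pairs (i, c) with 0 ≤ i < √q − 1 and 0 ≤ c < q − 1 such that there exists a ∈ [q] with a ≡ i (mod √q − 1) and c ≤₂ a, is O((5 + √5)^{ℓ/2}). -/
/-!
Write `N = 2 ^ r`. Complementing inside `2r` bits and splitting into `r`-bit halves, the residues
`i` admissible for a fixed `c` are determined by the sums `x + y` with `x ⊆ u`, `y ⊆ v`, where
`(u, v)` are the halves of the complement of `c`; so `e` is at most the sum over `u, v < N` of
`#(submasks u + submasks v)`. Such a sumset `S` lies below `2N` and is closed under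
`n + N ↦ n` (a carry into bit `r` can be undone by deleting bits). Counting its elements below
and above `N` as `(lo, hi)`, adding the bit `N` to `u`, `v`, or both turns `S` into `S`,
`S + {0, N}`, `S + {0, N}`, `S + {0, N} + {0, N}`, and over these four extensions the counts at
level `2N` are at most `(7 lo + hi, lo + 3 hi)`. The matrix `!![7, 1; 1, 3]` has top eigenvalue
`5 + √5`.
-/

open scoped Classical

open Finset
open scoped Pointwise

lemma Nat.mod_two_pow_eq_or_add_eq {x r : ℕ} (hx : x < 2 ^ (r + 1)) :
    x % 2 ^ r = x ∨ x % 2 ^ r + 2 ^ r = x := by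
  rw [pow_succ] at hx
  by_cases h : x < 2 ^ r
  · exact .inl (Nat.mod_eq_of_lt h)
  · rw [Nat.mod_eq_sub_mod (not_lt.1 h), Nat.mod_eq_of_lt (by omega)]
    omega

lemma Nat.testBit_two_pow_add {u r : ℕ} (hu : u < 2 ^ r) (i : ℕ) :
    (2 ^ r + u).testBit i = (decide (r = i) || u.testBit i) := by
  rw [add_comm, ← Nat.or_two_pow_eq_add_of_lt hu, Nat.testBit_or, Nat.testBit_two_pow,
    Bool.or_comm]

namespace Shadow2

lemma le_s17 {x u : ℕ} (h : Shadow2 x u) : x ≤ u := Nat.le_of_testBit h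

lemma refl (x : ℕ) : Shadow2 x x := fun _ h => h

lemma trans {x y z : ℕ} (hxy : Shadow2 x y) (hyz : Shadow2 y z) : Shadow2 x z :=
  fun i hi => hyz i (hxy i hi)

lemma mod_two_pow_self (x r : ℕ) : Shadow2 (x % 2 ^ r) x := by
  intro i hi
  simp only [Nat.testBit_mod_two_pow, Bool.and_eq_true] at hi
  exact hi.2

lemma mod_two_pow {x u : ℕ} (h : Shadow2 x u) (r : ℕ) : Shadow2 (x % 2 ^ r) (u % 2 ^ r) := by
  intro i hi
  simp only [Nat.testBit_mod_two_pow, Bool.and_eq_true] at hi ⊢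
  exact ⟨hi.1, h i hi.2⟩

lemma div_two_pow {x u : ℕ} (h : Shadow2 x u) (r : ℕ) : Shadow2 (x / 2 ^ r) (u / 2 ^ r) := by
  intro i hi
  rw [Nat.testBit_div_two_pow] at hi ⊢
  exact h _ hi

lemma two_pow_sub_succ {c a n : ℕ} (hc : c < 2 ^ n) (ha : a < 2 ^ n) (h : Shadow2 c a) :
    Shadow2 (2 ^ n - (a + 1)) (2 ^ n - (c + 1)) := by
  intro i hi
  simp only [Nat.testBit_two_pow_sub_succ ha, Nat.testBit_two_pow_sub_succ hc, Bool.and_eq_true,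
    Bool.not_eq_true'] at hi ⊢
  refine ⟨hi.1, ?_⟩
  cases hci : c.testBit i
  · rfl
  · simp [h i hci] at hi

lemma exists_add_eq_of_add_eq_add_two_pow {r x y n : ℕ} (hx : x < 2 ^ r) (hy : y < 2 ^ r)
    (h : x + y = n + 2 ^ r) : ∃ x' y', Shadow2 x' x ∧ Shadow2 y' y ∧ x' + y' = n := by
  induction r generalizing x y n with
  | zero => simp at hx hy; omega
  | succ r ih =>
    have hx0 := mod_two_pow_self x r
    have hy0 := mod_two_pow_self y r
    by_cases hn : x % 2 ^ r + y % 2 ^ r = n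
    · exact ⟨_, _, hx0, hy0, hn⟩
    have hcarry : x % 2 ^ r + y % 2 ^ r = n + 2 ^ r := by
      rw [pow_succ] at h
      rcases Nat.mod_two_pow_eq_or_add_eq hx with hx' | hx' <;>
        rcases Nat.mod_two_pow_eq_or_add_eq hy with hy' | hy' <;> omega
    obtain ⟨x', y', hx', hy', rfl⟩ :=
      ih (Nat.mod_lt _ (Nat.two_pow_pos r)) (Nat.mod_lt _ (Nat.two_pow_pos r)) hcarry
    exact ⟨x', y', hx'.trans hx0, hy'.trans hy0, rfl⟩

end Shadow2

noncomputable def submasks (u : ℕ) : Finset ℕ := (range (u + 1)).filter (Shadow2 · u)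

@[simp]
lemma mem_submasks {x u : ℕ} : x ∈ submasks u ↔ Shadow2 x u := by
  simp only [submasks, mem_filter, mem_range, and_iff_right_iff_imp]
  exact fun h => Nat.lt_succ_of_le h.le_s17

lemma submasks_zero : submasks 0 = {0} := by
  ext x
  simp only [mem_submasks, mem_singleton]
  exact ⟨fun h => Nat.le_zero.1 h.le_s17, fun h => h ▸ Shadow2.refl 0⟩

lemma submasks_two_pow_add {u r : ℕ} (hu : u < 2 ^ r) :
    submasks (2 ^ r + u) = submasks u + {0, 2 ^ r} := by
  ext x
  simp only [mem_add, mem_submasks, mem_insert, mem_singleton, exists_eq_or_imp, exists_eq_left,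
    add_zero]
  constructor
  · intro h
    have hx : x < 2 ^ (r + 1) := by rw [pow_succ]; linarith [h.le_s17]
    have hlow : Shadow2 (x % 2 ^ r) u := by
      intro i hi
      simp only [Nat.testBit_mod_two_pow, Bool.and_eq_true, decide_eq_true_eq] at hi
      simpa [Nat.testBit_two_pow_add hu, hi.1.ne'] using h i hi.2
    refine ⟨x % 2 ^ r, hlow, ?_⟩
    rcases Nat.mod_two_pow_eq_or_add_eq hx with hx' | hx' <;> simp [hx']
  · rintro ⟨y, hy, rfl | rfl⟩
    · exact fun i hi => by simp [Nat.testBit_two_pow_add hu, hy i hi]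
    · intro i hi
      rw [add_comm y, Nat.testBit_two_pow_add (hy.le_s17.trans_lt hu)] at hi
      rw [Nat.testBit_two_pow_add hu]
      rcases Bool.or_eq_true_iff.1 hi with hi | hi
      · simp [hi]
      · simp [hy i hi]

def lowCount (N : ℕ) (S : Finset ℕ) : ℕ := #(S.filter (· < N))

def highCount (N : ℕ) (S : Finset ℕ) : ℕ := #(S.filter (N ≤ ·))

section Counting

variable {N : ℕ} {S : Finset ℕ}

lemma lowCount_add_highCount (N : ℕ) (S : Finset ℕ) : lowCount N S + highCount N S = #S := by
  simpa only [lowCount, highCount, not_lt] using card_filter_add_card_filter_not (· < N)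

lemma highCount_eq_zero (hS : ∀ s ∈ S, s < N) : highCount N S = 0 := by
  simpa [highCount, filter_eq_empty_iff] using fun s hs => hS s hs

lemma lowCount_mono {T : Finset ℕ} (h : S ⊆ T) : lowCount N S ≤ lowCount N T :=
  card_le_card (filter_subset_filter _ h)

lemma lowCount_two_mul_add_pair_add_pair_le (hshift : ∀ n, n + N ∈ S → n ∈ S) :
    lowCount (2 * N) (S + {0, N} + {0, N}) ≤ 2 * lowCount N S := by
  set L := S.filter (· < N)
  calc lowCount (2 * N) (S + {0, N} + {0, N}) ≤ #(L ∪ L.image (· + N)) := by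
        refine card_le_card fun t ht => ?_
        simp only [mem_filter, mem_add, mem_insert, mem_singleton, exists_eq_or_imp,
          exists_eq_left, add_zero] at ht
        obtain ⟨⟨_, ⟨s, hs, rfl | rfl⟩, rfl | rfl⟩, ht⟩ := ht
        all_goals simp only [L, mem_union, mem_filter, mem_image]
        · by_cases hsN : s < N
          · exact .inl ⟨hs, hsN⟩
          · exact .inr ⟨s - N, ⟨hshift _ (by rwa [Nat.sub_add_cancel (by omega)]), by omega⟩,
              by omega⟩
        all_goals first | omega | exact .inr ⟨s, ⟨hs, by omega⟩, rfl⟩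
    _ ≤ #L + #L := (card_union_le _ _).trans (Nat.add_le_add_left card_image_le _)
    _ = 2 * lowCount N S := by rw [two_mul]; rfl

lemma highCount_two_mul_add_pair_le (hS : ∀ s ∈ S, s < 2 * N) :
    highCount (2 * N) (S + {0, N}) ≤ highCount N S := by
  refine (card_le_card fun t ht => ?_).trans (card_image_le (f := (· + N)))
  simp only [mem_filter, mem_add, mem_insert, mem_singleton, exists_eq_or_imp, exists_eq_left,
    add_zero] at ht
  obtain ⟨⟨s, hs, rfl | rfl⟩, ht⟩ := ht
  · linarith [hS s hs]
  · exact mem_image.2 ⟨s, mem_filter.2 ⟨hs, by omega⟩, rfl⟩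

lemma highCount_two_mul_add_pair_add_pair_le (hS : ∀ s ∈ S, s < 2 * N)
    (hshift : ∀ n, n + N ∈ S → n ∈ S) : highCount (2 * N) (S + {0, N} + {0, N}) ≤ #S := by
  refine (card_le_card fun t ht => ?_).trans (card_image_le (f := (· + 2 * N)))
  simp only [mem_filter, mem_add, mem_insert, mem_singleton, exists_eq_or_imp, exists_eq_left,
    add_zero] at ht
  obtain ⟨⟨_, ⟨s, hs, rfl | rfl⟩, rfl | rfl⟩, ht⟩ := ht
  · linarith [hS s hs]
  all_goals first
    | exact mem_image.2 ⟨s, hs, by omega⟩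
    | exact mem_image.2 ⟨s - N, hshift _ (by rwa [Nat.sub_add_cancel (by omega)]), by omega⟩

/-- `(1, √5 - 2)` is a left eigenvector of `!![7, 1; 1, 3]` for its top eigenvalue `5 + √5`. -/
noncomputable def weight (N : ℕ) (S : Finset ℕ) : ℝ :=
  lowCount N S + (√5 - 2) * highCount N S

lemma two_le_sqrt_five : (2 : ℝ) ≤ √5 := by
  rw [show (2 : ℝ) = √(2 ^ 2) by simp]; exact Real.sqrt_le_sqrt (by norm_num)

lemma card_le_weight (N : ℕ) (S : Finset ℕ) : (#S : ℝ) ≤ (√5 + 2) * weight N S := by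
  have h5 : √5 * √5 = 5 := Real.mul_self_sqrt (by norm_num)
  have hsum : (lowCount N S : ℝ) + highCount N S = #S := by
    exact_mod_cast lowCount_add_highCount N S
  have : (0 : ℝ) ≤ lowCount N S := Nat.cast_nonneg _
  rw [weight, ← hsum]
  nlinarith [two_le_sqrt_five]

lemma weight_two_mul_le (hS : ∀ s ∈ S, s < 2 * N) (hshift : ∀ n, n + N ∈ S → n ∈ S) :
    weight (2 * N) S + 2 * weight (2 * N) (S + {0, N}) + weight (2 * N) (S + {0, N} + {0, N})
      ≤ (5 + √5) * weight N S := by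
  have h5 : √5 * √5 = 5 := Real.mul_self_sqrt (by norm_num)
  have hφ : (0 : ℝ) ≤ √5 - 2 := by linarith [two_le_sqrt_five]
  have hsum : (lowCount N S : ℝ) + highCount N S = #S := by
    exact_mod_cast lowCount_add_highCount N S
  have hlo₀ : (lowCount (2 * N) S : ℝ) ≤ #S := by exact_mod_cast card_filter_le _ _
  have hhi₀ : (highCount (2 * N) S : ℝ) = 0 := by exact_mod_cast highCount_eq_zero hS
  have hlo₂ : (lowCount (2 * N) (S + {0, N} + {0, N}) : ℝ) ≤ 2 * lowCount N S := by
    exact_mod_cast lowCount_two_mul_add_pair_add_pair_le hshift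
  have hlo₁ : (lowCount (2 * N) (S + {0, N}) : ℝ) ≤ 2 * lowCount N S := by
    exact_mod_cast (lowCount_mono (subset_add_left _ (by simp))).trans
      (lowCount_two_mul_add_pair_add_pair_le hshift)
  have hhi₁ : (highCount (2 * N) (S + {0, N}) : ℝ) ≤ highCount N S := by
    exact_mod_cast highCount_two_mul_add_pair_le hS
  have hhi₂ : (highCount (2 * N) (S + {0, N} + {0, N}) : ℝ) ≤ #S := by
    exact_mod_cast highCount_two_mul_add_pair_add_pair_le hS hshift
  simp only [weight, hhi₀]
  nlinarith [mul_le_mul_of_nonneg_left hhi₁ hφ, mul_le_mul_of_nonneg_left hhi₂ hφ]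

end Counting

section SubmaskSums

variable {r u v : ℕ}

lemma lt_two_mul_two_pow_of_mem_submasks_add (hu : u < 2 ^ r) (hv : v < 2 ^ r) {s : ℕ}
    (hs : s ∈ submasks u + submasks v) : s < 2 * 2 ^ r := by
  obtain ⟨x, hx, y, hy, rfl⟩ := mem_add.1 hs
  linarith [(mem_submasks.1 hx).le_s17, (mem_submasks.1 hy).le_s17]

lemma mem_submasks_add_of_add_two_pow_mem (hu : u < 2 ^ r) (hv : v < 2 ^ r) {n : ℕ}
    (hn : n + 2 ^ r ∈ submasks u + submasks v) : n ∈ submasks u + submasks v := by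
  obtain ⟨x, hx, y, hy, hxy⟩ := mem_add.1 hn
  rw [mem_submasks] at hx hy
  obtain ⟨x', y', hx', hy', rfl⟩ :=
    Shadow2.exists_add_eq_of_add_eq_add_two_pow (hx.le_s17.trans_lt hu) (hy.le_s17.trans_lt hv) hxy
  exact mem_add.2 ⟨x', mem_submasks.2 (hx'.trans hx), y', mem_submasks.2 (hy'.trans hy), rfl⟩

end SubmaskSums

noncomputable def potential (r : ℕ) : ℝ :=
  ∑ u ∈ range (2 ^ r), ∑ v ∈ range (2 ^ r), weight (2 ^ r) (submasks u + submasks v)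

lemma sum_range_two_pow_succ {M : Type*} [AddCommMonoid M] (f : ℕ → M) (r : ℕ) :
    ∑ u ∈ range (2 ^ (r + 1)), f u = ∑ u ∈ range (2 ^ r), (f u + f (2 ^ r + u)) := by
  rw [pow_succ, mul_two, sum_range_add, sum_add_distrib]

lemma potential_succ_le (r : ℕ) : potential (r + 1) ≤ (5 + √5) * potential r := by
  simp only [potential, sum_range_two_pow_succ _ r, ← sum_add_distrib, mul_sum]
  refine sum_le_sum fun u hu => sum_le_sum fun v hv => ?_
  rw [mem_range] at hu hv
  set P : Finset ℕ := {0, 2 ^ r}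
  have hPv : submasks u + (submasks v + P) = submasks u + submasks v + P := (add_assoc ..).symm
  have hPu : submasks u + P + submasks v = submasks u + submasks v + P := add_right_comm ..
  have hPP : submasks u + P + (submasks v + P) = submasks u + submasks v + P + P := by
    rw [← add_assoc, hPu]
  rw [submasks_two_pow_add hu, submasks_two_pow_add hv, hPP, hPv, hPu, pow_succ']
  have := weight_two_mul_le (fun s => lt_two_mul_two_pow_of_mem_submasks_add hu hv)
    (fun n => mem_submasks_add_of_add_two_pow_mem hu hv)
  linarith

lemma potential_le (r : ℕ) : potential r ≤ (5 + √5) ^ r := by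
  induction r with
  | zero => simp [potential, weight, lowCount, highCount, submasks_zero, filter_singleton]
  | succ r ih =>
    rw [pow_succ']
    exact (potential_succ_le r).trans (by gcongr)

lemma card_pairs_le_sum_card_submasks_add (r : ℕ) :
    #((range (2 ^ r - 1) ×ˢ range (2 ^ (2 * r) - 1)).filter
        (fun p => ∃ a < 2 ^ (2 * r), a % (2 ^ r - 1) = p.1 ∧ Shadow2 p.2 a))
      ≤ ∑ u ∈ range (2 ^ r), ∑ v ∈ range (2 ^ r), #(submasks u + submasks v) := by
  have hQ : 2 ^ (2 * r) = 2 ^ r * 2 ^ r := by rw [two_mul, pow_add]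
  set N := 2 ^ r
  set M := 2 ^ r - 1
  set Q := 2 ^ (2 * r)
  have hNM : N = M + 1 := (Nat.sub_add_cancel Nat.one_le_two_pow).symm
  -- With `a' = Q - 1 - a`, `a ≡ -1 - a' ≡ -1 - (a' % N + a' / N) (mod M)` since `N ≡ 1`.
  let g : (Σ _ : ℕ × ℕ, ℕ) → ℕ × ℕ := fun x =>
    ((Q - (x.2 + 1)) % M, Q - (x.1.1 + N * x.1.2 + 1))
  calc _ ≤ #(((range N ×ˢ range N).sigma fun p => submasks p.1 + submasks p.2).image g) := by
        refine card_le_card fun ⟨i, c⟩ h => ?_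
        simp only [mem_filter, mem_product, mem_range] at h
        obtain ⟨⟨-, hc⟩, a, ha, rfl, hca⟩ := h
        set w := Q - (c + 1)
        set a' := Q - (a + 1)
        have hw : Shadow2 a' w := Shadow2.two_pow_sub_succ (by omega) ha hca
        have hmem : (⟨(w % N, w / N), a' % N + a' / N⟩ : Σ _ : ℕ × ℕ, ℕ) ∈
            (range N ×ˢ range N).sigma fun p => submasks p.1 + submasks p.2 :=
          mem_sigma.2 ⟨mem_product.2 ⟨mem_range.2 (Nat.mod_lt _ (Nat.two_pow_pos r)),
              mem_range.2 (Nat.div_lt_of_lt_mul (by omega))⟩,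
            mem_add.2 ⟨_, mem_submasks.2 (hw.mod_two_pow r), _, mem_submasks.2 (hw.div_two_pow r),
              rfl⟩⟩
        refine mem_image.2 ⟨_, hmem, Prod.ext ?_ ?_⟩
        · have ha' := Nat.mod_add_div a' N
          have hsplit : N * (a' / N) = M * (a' / N) + a' / N := by rw [hNM]; ring
          change (Q - (a' % N + a' / N + 1)) % M = a % M
          rw [show Q - (a' % N + a' / N + 1) = a + M * (a' / N) by omega,
            Nat.add_mul_mod_self_left]
        · change Q - (w % N + N * (w / N) + 1) = c
          rw [Nat.mod_add_div]
          omega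
    _ ≤ #((range N ×ˢ range N).sigma fun p => submasks p.1 + submasks p.2) := card_image_le
    _ = _ := by rw [card_sigma, sum_product]

/-- For `q = 2^ℓ` with `ℓ = 2r` even, the number `e(√q - 1, q - 1)` of valid
pairs `(i, c)` with `i < √q - 1`, `c < q - 1` such that some `a ∈ [q]` has
`a ≡ i (mod √q - 1)` and `c ≤₂ a`, is `O((5 + √5)^(ℓ/2))`. -/
theorem eST_bound :
    ∃ C : ℝ, 0 < C ∧ ∀ r : ℕ,
      ((((Finset.range (2 ^ r - 1) ×ˢ Finset.range (2 ^ (2 * r) - 1)).filter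
          (fun p => ∃ a < 2 ^ (2 * r),
            a % (2 ^ r - 1) = p.1 ∧ Shadow2 p.2 a)).card : ℝ))
        ≤ C * (5 + Real.sqrt 5) ^ r := by
  refine ⟨√5 + 2, by positivity, fun r => ?_⟩
  calc _ ≤ ∑ u ∈ range (2 ^ r), ∑ v ∈ range (2 ^ r), (#(submasks u + submasks v) : ℝ) :=
        mod_cast card_pairs_le_sum_card_submasks_add r
    _ ≤ ∑ u ∈ range (2 ^ r), ∑ v ∈ range (2 ^ r),
          (√5 + 2) * weight (2 ^ r) (submasks u + submasks v) :=
        sum_le_sum fun u _ => sum_le_sum fun v _ => card_le_weight _ _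
    _ = (√5 + 2) * potential r := by simp only [potential, mul_sum]
    _ ≤ (√5 + 2) * (5 + √5) ^ r := by gcongr; exact potential_le r
end
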